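/- arXiv:0806.1236 — 3 statements merged into one kernel-verified Lean document; each statement's English description precedes it below -/
import Mathlib

section
/- Let n and m be positive integers and let ω : T → Bool be any configuration. Then every cycle C of φ_ω has a well-defined homology class: n divides h(C) := #{z ∈ C : ω(z) = true} and m divides v(C) := #{z ∈ C : ω(z) = false}, so C has homology class (p,q) = (h(C)/n, v(C)/m). Moreover any two cycles of φ_ω have the same homology class (p,q), and p and q are relatively prime. -/
open Function Filter

/-- The discrete torus `Z_n × Z_m`. -/
abbrev Torus (n m : ℕ) := ZMod n × ZMod m

/-- The quenched random walk determined by a configuration `ω`: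
`φ_ω(x,y) = (x+1,y)` if `ω(x,y) = true` and `(x,y+1)` otherwise. -/
def step {n m : ℕ} (ω : Torus n m → Bool) (z : Torus n m) : Torus n m :=
  if ω z then (z.1 + 1, z.2) else (z.1, z.2 + 1)

/-- The set of cycles of `step ω`: the orbits of its periodic points. -/
def cycles {n m : ℕ} (ω : Torus n m → Bool) : Set (Set (Torus n m)) :=
  {C | ∃ z ∈ periodicPts (step ω), C = {w | ∃ i : ℕ, (step ω)^[i] z = w}}

/-- `N(ω)`: the total number of distinct cycles of `step ω`. -/
noncomputable def numCycles {n m : ℕ} (ω : Torus n m → Bool) : ℕ :=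
  (cycles ω).ncard

/-- A cycle `C` has homology class `(p, q)`: it contains `n·p` points where `ω` is
`true` (horizontal steps) and `m·q` points where `ω` is `false` (vertical steps). -/
def HasHomology {n m : ℕ} (ω : Torus n m → Bool) (C : Set (Torus n m)) (p q : ℕ) : Prop :=
  {z ∈ C | ω z = true}.ncard = n * p ∧ {z ∈ C | ω z = false}.ncard = m * q

/-- `N_{(p,q)}(ω)`: the number of distinct cycles of `step ω` of homology class `(p, q)`. -/
noncomputable def numCyclesPQ {n m : ℕ} (ω : Torus n m → Bool) (p q : ℕ) : ℕ :=
  {C ∈ cycles ω | HasHomology ω C p q}.ncard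

/-- The probability of an event under the uniform (CRSF) measure on the `2^{nm}`
configurations. -/
noncomputable def prob {n m : ℕ} (A : (Torus n m → Bool) → Prop) : ℝ :=
  ({ω | A ω} : Set (Torus n m → Bool)).ncard / 2 ^ (n * m)

/-- The expectation of a functional under the uniform (CRSF) measure on configurations. -/
noncomputable def expect {n m : ℕ} (f : (Torus n m → Bool) → ℝ) : ℝ :=
  (∑ᶠ ω, f ω) / 2 ^ (n * m)

/-!
Lift the walk to `ℤ²`. A cycle of period `k` lifts to an up-right lattice path invariant under
translation by `(n * p, m * q)`, where `n * p` and `m * q` count its horizontal and vertical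
steps, so `k = n * p + m * q`. Up-right paths that never meet stay strictly on one side of each
other. If `d = gcd p q > 1`, the translate of the path by `(n * p, m * q) / d` is a lift of the
same cycle that cannot meet it (a common point would give the cycle period `k / d`), hence lies
strictly on one side, and `d` such translations would move the path strictly off itself. Lifts of two
different cycles never meet, so their difference has constant sign and their slopes `p / k`
agree; for primitive classes this means equal `(p, q)`.
-/

open Finset

lemma Nat.Coprime.eq_of_mul_eq_mul {p q p' q' : ℕ} (h : p.Coprime q) (h' : p'.Coprime q')
    (hpq : p * q' = p' * q) : p = p' ∧ q = q' :=
  ⟨Nat.dvd_antisymm (h.dvd_of_dvd_mul_right ⟨q', hpq.symm⟩)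
      (h'.dvd_of_dvd_mul_right ⟨q, hpq⟩),
    Nat.dvd_antisymm (h.symm.dvd_of_dvd_mul_right ⟨p', by rw [mul_comm, hpq, mul_comm]⟩)
      (h'.symm.dvd_of_dvd_mul_right ⟨p, by rw [mul_comm, ← hpq, mul_comm]⟩)⟩

lemma add_mul_of_add_eq {g : ℤ → ℤ} {K D : ℤ} (h : ∀ t, g (t + K) = g t + D) (t j : ℤ) :
    g (t + j * K) = g t + j * D := by
  simpa using AddConstMapClass.map_add_zsmul (⟨g, h⟩ : AddConstMap ℤ ℤ K D) t j

lemma nat_mul_le_sub_of_le_sub {g : ℤ → ℤ} {a c : ℤ} (h : ∀ t, c ≤ g (t + a) - g t)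
    (t : ℤ) (j : ℕ) : j * c ≤ g (t + j * a) - g t := by
  induction j with
  | zero => simp
  | succ j ih =>
    have := h (t + j * a)
    push_cast
    rw [show t + ((j : ℤ) + 1) * a = t + j * a + a by ring]
    linarith

lemma forall_pos_or_forall_neg_of_ne_zero {f : ℤ → ℤ} (hf : ∀ t, f t ≠ 0)
    (hstep : ∀ t, |f (t + 1) - f t| ≤ 1) : (∀ t, 0 < f t) ∨ ∀ t, f t < 0 := by
  have hsucc (t : ℤ) : 0 < f (t + 1) ↔ 0 < f t := by
    have := hf t; have := hf (t + 1); have := abs_le.mp (hstep t)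
    omega
  have hsign (t : ℤ) : 0 < f t ↔ 0 < f 0 := by
    induction t using Int.induction_on with
    | zero => rfl
    | succ i ih => rw [hsucc, ih]
    | pred i ih => rwa [← hsucc, sub_add_cancel]
  rcases (hf 0).lt_or_gt with h | h
  · exact .inr fun t => by have := hf t; have := hsign t; omega
  · exact .inl fun t => (hsign t).mpr h

lemma eq_zero_of_pos_of_add_eq {f : ℤ → ℤ} {K D : ℤ} (hpos : ∀ t, 0 < f t)
    (hper : ∀ t, f (t + K) = f t + D) : D = 0 := by
  -- after `-(f 0) * D` periods, `f` would take the value `f 0 * (1 - D ^ 2) ≤ 0`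
  have h := hpos (0 + -(f 0) * D * K)
  rw [add_mul_of_add_eq hper] at h
  have h0 := hpos 0
  have hD : D * D < 1 := by nlinarith
  nlinarith

/-- A lattice path in `ℤ²` with unit steps to the right or up, recorded by its x-coordinate
`x t` on each antidiagonal `x + y = t`. -/
def IsUpRightPath (x : ℤ → ℤ) : Prop :=
  ∀ t, x (t + 1) = x t ∨ x (t + 1) = x t + 1

namespace IsUpRightPath

variable {x x₁ x₂ : ℤ → ℤ}

lemma abs_sub_sub_le_one (h₁ : IsUpRightPath x₁) (h₂ : IsUpRightPath x₂) (t s : ℤ) :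
    |(x₁ (t + 1) - x₂ (s + 1)) - (x₁ t - x₂ s)| ≤ 1 := by
  rcases h₁ t with h | h <;> rcases h₂ s with h' | h' <;> rw [h, h', abs_le] <;> omega

/-- A path invariant under translation by `d • v` meets its translate by `v`: otherwise it lies
strictly on one side of that translate, and translating `d` times moves it strictly off itself. -/
lemma exists_add_eq (hx : IsUpRightPath x) {a b : ℤ} {d : ℕ} (hd : d ≠ 0)
    (hper : ∀ t, x (t + d * a) = x t + d * b) : ∃ t, x (t + a) = x t + b := by
  by_contra! hne
  have hstep (t : ℤ) : |(x (t + 1 + a) - b - x (t + 1)) - (x (t + a) - b - x t)| ≤ 1 := by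
    rw [add_right_comm]
    convert hx.abs_sub_sub_le_one hx (t + a) t using 2
    ring
  have hd' : (0 : ℤ) < d := by exact_mod_cast Nat.pos_of_ne_zero hd
  rcases forall_pos_or_forall_neg_of_ne_zero (f := fun t => x (t + a) - b - x t)
    (fun t => by have := hne t; omega) hstep with hpos | hneg
  · have := nat_mul_le_sub_of_le_sub (g := x) (c := b + 1) (fun t => by linarith [hpos t]) 0 d
    linarith [hper 0]
  · have := nat_mul_le_sub_of_le_sub (g := fun t => - x t) (c := 1 - b)
      (fun t => by linarith [hneg t]) 0 d
    linarith [hper 0]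

/-- The difference of two disjoint paths has constant sign, so it cannot drift. -/
lemma drift_eq_of_forall_ne (h₁ : IsUpRightPath x₁) (h₂ : IsUpRightPath x₂) {K A₁ A₂ : ℤ}
    (hper₁ : ∀ t, x₁ (t + K) = x₁ t + A₁) (hper₂ : ∀ t, x₂ (t + K) = x₂ t + A₂)
    (hne : ∀ t, x₁ t ≠ x₂ t) : A₁ = A₂ := by
  rcases forall_pos_or_forall_neg_of_ne_zero (f := fun t => x₁ t - x₂ t)
    (fun t => sub_ne_zero.mpr (hne t)) fun t => h₁.abs_sub_sub_le_one h₂ t t with hpos | hneg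
  · have := eq_zero_of_pos_of_add_eq (f := fun t => x₁ t - x₂ t) hpos (K := K) (D := A₁ - A₂)
      fun t => by simp only [hper₁, hper₂]; ring
    linarith
  · have := eq_zero_of_pos_of_add_eq (f := fun t => x₂ t - x₁ t) (fun t => by linarith [hneg t])
      (K := K) (D := A₂ - A₁) fun t => by simp only [hper₁, hper₂]; ring
    linarith

end IsUpRightPath

section Torus

variable {n m : ℕ}

/-- The image in the torus of the lattice point `(x, t - x)` on the antidiagonal of level `t`. -/
def latticeProj (n m : ℕ) (x t : ℤ) : Torus n m :=
  ((x : ZMod n), ((t - x : ℤ) : ZMod m))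

lemma latticeProj_eq_latticeProj_iff {x t x' t' : ℤ} :
    latticeProj n m x t = latticeProj n m x' t' ↔
      (n : ℤ) ∣ x' - x ∧ (m : ℤ) ∣ (t' - x') - (t - x) := by
  simp only [latticeProj, Prod.mk.injEq, ZMod.intCast_eq_intCast_iff_dvd_sub]

lemma exists_latticeProj_eq (z : Torus n m) : ∃ x t, latticeProj n m x t = z := by
  obtain ⟨x, hx⟩ := ZMod.intCast_surjective z.1
  obtain ⟨y, hy⟩ := ZMod.intCast_surjective z.2
  exact ⟨x, x + y, by simp [latticeProj, hx, hy]⟩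

lemma step_latticeProj (ω : Torus n m → Bool) (x t : ℤ) :
    step ω (latticeProj n m x t) =
      latticeProj n m (x + if ω (latticeProj n m x t) then 1 else 0) (t + 1) := by
  unfold step
  split_ifs <;> simp [latticeProj, sub_add_eq_sub_sub, add_sub_right_comm]

lemma eq_of_mem_cycles {ω : Torus n m → Bool} {C C' : Set (Torus n m)} (hC : C ∈ cycles ω)
    (hC' : C' ∈ cycles ω) {w : Torus n m} (hw : w ∈ C) (hw' : w ∈ C') : C = C' := by
  obtain ⟨z, hz, rfl⟩ := hC
  obtain ⟨z', hz', rfl⟩ := hC'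
  obtain ⟨i, rfl⟩ := hw
  obtain ⟨i', hi'⟩ := hw'
  have : periodicOrbit (step ω) z = periodicOrbit (step ω) z' := by
    rw [← periodicOrbit_apply_iterate_eq hz i, ← hi', periodicOrbit_apply_iterate_eq hz' i']
  ext w
  rw [Set.mem_ofPred_eq, Set.mem_ofPred_eq, ← mem_periodicOrbit_iff hz,
    ← mem_periodicOrbit_iff hz', this]

end Torus

/-- A lift of the cycle `C` to an up-right path in `ℤ²` running once through every level,
invariant under translation by the vector `(n * p, m * q)` whose `ℓ¹`-length `k` is the period
of `C`. -/
structure CycleLift {n m : ℕ} (ω : Torus n m → Bool) (C : Set (Torus n m)) where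
  x : ℤ → ℤ
  p : ℕ
  q : ℕ
  k : ℕ
  k_eq : k = n * p + m * q
  k_pos : 0 < k
  isUpRightPath : IsUpRightPath x
  x_add_k : ∀ t, x (t + k) = x t + n * p
  latticeProj_mem : ∀ t, latticeProj n m (x t) t ∈ C
  k_dvd_of_latticeProj_eq :
    ∀ t s, latticeProj n m (x t) t = latticeProj n m (x s) s → (k : ℤ) ∣ t - s
  hasHomology : HasHomology ω C p q

namespace CycleLift

variable {n m : ℕ} {ω : Torus n m → Bool} {C C' : Set (Torus n m)}

lemma coprime (L : CycleLift ω C) : L.p.Coprime L.q := by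
  obtain ⟨p₀, hp⟩ := Nat.gcd_dvd_left L.p L.q
  obtain ⟨q₀, hq⟩ := Nat.gcd_dvd_right L.p L.q
  set d := L.p.gcd L.q
  set k₀ := n * p₀ + m * q₀
  have hk : L.k = d * k₀ := by rw [L.k_eq, hp, hq]; ring
  have hd : d ≠ 0 := by rintro hd; simp [hd, L.k_pos.ne'] at hk
  have hk₀ : 0 < k₀ := Nat.pos_of_mul_pos_left (hk ▸ L.k_pos)
  obtain ⟨t, ht⟩ := L.isUpRightPath.exists_add_eq (a := k₀) (b := n * p₀) hd fun t => by
    rw [← Nat.cast_mul, ← hk, L.x_add_k, hp]; push_cast; ring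
  have hdvd := L.k_dvd_of_latticeProj_eq (t + k₀) t (by
    rw [ht, latticeProj_eq_latticeProj_iff]
    exact ⟨⟨-p₀, by ring⟩, ⟨-q₀, by push_cast [k₀]; ring⟩⟩)
  rw [add_sub_cancel_left, Int.natCast_dvd_natCast, hk] at hdvd
  have : d * k₀ ≤ 1 * k₀ := by simpa using Nat.le_of_dvd hk₀ hdvd
  exact Nat.le_antisymm (Nat.le_of_mul_le_mul_right this hk₀) (Nat.pos_of_ne_zero hd)

lemma x_add_mul_k (L : CycleLift ω C) (t j : ℤ) : L.x (t + j * L.k) = L.x t + j * (n * L.p) :=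
  add_mul_of_add_eq L.x_add_k t j

/-- Lifts of disjoint cycles have the same drift `n * p / k` over a common period `k * k'`. -/
lemma p_mul_q_eq (hn : 0 < n) (hm : 0 < m) (L : CycleLift ω C) (L' : CycleLift ω C')
    (hCC' : Disjoint C C') : L.p * L'.q = L'.p * L.q := by
  have hdrift := L.isUpRightPath.drift_eq_of_forall_ne L'.isUpRightPath (K := L'.k * L.k)
    (fun t => L.x_add_mul_k t L'.k) (fun t => by rw [mul_comm]; exact L'.x_add_mul_k t L.k)
    (fun t ht => hCC'.ne_of_mem (L.latticeProj_mem t) (L'.latticeProj_mem t) (by rw [ht]))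
  have : (n * m : ℤ) * (L.p * L'.q - L'.p * L.q) = 0 := by
    rw [L.k_eq, L'.k_eq] at hdrift
    push_cast at hdrift
    linear_combination hdrift
  have hnm : (n * m : ℤ) ≠ 0 := by positivity
  exact_mod_cast sub_eq_zero.mp ((mul_eq_zero.mp this).resolve_left hnm)

end CycleLift

lemma exists_nat_add_mul (t : ℤ) {k : ℕ} (hk : 0 < k) : ∃ r < k, ∃ j : ℤ, t = r + j * k := by
  have := Int.emod_lt_of_pos t (Int.natCast_pos.mpr hk)
  have := Int.emod_nonneg t (Int.natCast_pos.mpr hk).ne'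
  exact ⟨(t % k).toNat, by omega, t / k,
    by linarith [Int.mul_ediv_add_emod t k, Int.toNat_of_nonneg this]⟩

lemma exists_int_extension {g : ℕ → ℤ} {k : ℕ} (hk : 0 < k) {c : ℤ}
    (hg : ∀ i, g (i + k) = g i + c) :
    ∃ G : ℤ → ℤ, (∀ i : ℕ, G i = g i) ∧ ∀ t, G (t + k) = G t + c := by
  refine ⟨fun t => g (t % k).toNat + t / k * c, fun i => ?_, fun t => ?_⟩
  · have := AddConstMapClass.map_add_nsmul (⟨g, hg⟩ : AddConstMap ℕ ℤ k c) (i % k) (i / k)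
    simp only [AddConstMap.coe_mk, smul_eq_mul, nsmul_eq_mul, Nat.mod_add_div'] at this
    dsimp only
    rw [← Int.natCast_mod, ← Int.natCast_div, Int.toNat_natCast, this]
  · have hk' : (k : ℤ) ≠ 0 := by exact_mod_cast hk.ne'
    have hdiv : (t + k) / (k : ℤ) = t / k + 1 := by simpa using Int.add_mul_ediv_right t 1 hk'
    simp only [Int.add_emod_right, hdiv]
    ring

lemma ncard_sep_orbit {α : Type*} {f : α → α} {z : α} (hz : z ∈ periodicPts f) (P : α → Prop)
    [DecidablePred P] :
    {w ∈ {w | ∃ i, f^[i] z = w} | P w}.ncard =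
      #{i ∈ range (minimalPeriod f z) | P (f^[i] z)} := by
  have : {w ∈ {w | ∃ i, f^[i] z = w} | P w} =
      (f^[·] z) '' ↑({i ∈ range (minimalPeriod f z) | P (f^[i] z)} : Finset ℕ) := by
    ext w
    simp only [Set.mem_ofPred_eq, Set.mem_image, coe_filter, mem_range]
    constructor
    · rintro ⟨⟨i, rfl⟩, hP⟩
      refine ⟨i % minimalPeriod f z, ⟨Nat.mod_lt _ (minimalPeriod_pos_of_mem_periodicPts hz), ?_⟩,
        iterate_mod_minimalPeriod_eq⟩
      rwa [iterate_mod_minimalPeriod_eq]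
    · rintro ⟨i, ⟨-, hP⟩, rfl⟩
      exact ⟨⟨i, rfl⟩, hP⟩
  rw [this, Set.InjOn.ncard_image, Set.ncard_coe_finset]
  exact iterate_injOn_Iio_minimalPeriod.mono fun i hi => mem_range.mp (mem_filter.mp hi).1

section Walk

variable {n m : ℕ} (ω : Torus n m → Bool)

def horizontalSteps (z : Torus n m) (i : ℕ) : ℕ :=
  #{j ∈ range i | ω ((step ω)^[j] z) = true}

lemma horizontalSteps_succ (z : Torus n m) (i : ℕ) :
    horizontalSteps ω z (i + 1) = horizontalSteps ω z i + if ω ((step ω)^[i] z) then 1 else 0 := by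
  simp only [horizontalSteps, card_filter, sum_range_succ]

lemma horizontalSteps_add {z : Torus n m} {k : ℕ} (hz : IsPeriodicPt (step ω) k z) (i : ℕ) :
    horizontalSteps ω z (k + i) = horizontalSteps ω z k + horizontalSteps ω z i := by
  simp only [horizontalSteps, card_filter, sum_range_add]
  congr 1
  refine sum_congr rfl fun j _ => ?_
  rw [add_comm, iterate_add_apply, hz.eq]

lemma iterate_step_latticeProj (x t : ℤ) (i : ℕ) :
    (step ω)^[i] (latticeProj n m x t) =
      latticeProj n m (x + horizontalSteps ω (latticeProj n m x t) i) (t + i) := by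
  induction i with
  | zero => simp [horizontalSteps]
  | succ i ih =>
    rw [iterate_succ_apply', ih, step_latticeProj, ← ih, horizontalSteps_succ]
    split_ifs <;> push_cast <;> ring_nf

variable {ω} {z : Torus n m}

lemma exists_horizontalSteps_eq (hz : z ∈ periodicPts (step ω)) :
    ∃ p q : ℕ, horizontalSteps ω z (minimalPeriod (step ω) z) = n * p ∧
      minimalPeriod (step ω) z = n * p + m * q := by
  set k := minimalPeriod (step ω) z
  obtain ⟨x₀, t₀, rfl⟩ := exists_latticeProj_eq z
  set h := horizontalSteps ω (latticeProj n m x₀ t₀) k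
  have hle : h ≤ k := (card_filter_le _ _).trans (card_range k).le
  have hwalk := iterate_step_latticeProj ω x₀ t₀ k
  rw [iterate_minimalPeriod, latticeProj_eq_latticeProj_iff] at hwalk
  obtain ⟨p, hp⟩ : n ∣ h := Int.natCast_dvd_natCast.mp (by simpa using hwalk.1)
  obtain ⟨q, hq⟩ : m ∣ k - h := Int.natCast_dvd_natCast.mp (by
    push_cast [hle]
    convert hwalk.2 using 1
    ring)
  exact ⟨p, q, hp, by omega⟩

lemma hasHomology_orbit (hz : z ∈ periodicPts (step ω)) {p q : ℕ}
    (hp : horizontalSteps ω z (minimalPeriod (step ω) z) = n * p)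
    (hk : minimalPeriod (step ω) z = n * p + m * q) :
    HasHomology ω {w | ∃ i, (step ω)^[i] z = w} p q := by
  have hsum := card_filter_add_card_filter_not (s := range (minimalPeriod (step ω) z))
    fun i => ω ((step ω)^[i] z) = true
  simp only [Bool.not_eq_true, card_range] at hsum
  rw [HasHomology, ncard_sep_orbit hz, ncard_sep_orbit hz]
  exact ⟨hp, by rw [horizontalSteps] at hp; omega⟩

lemma exists_lift (hz : z ∈ periodicPts (step ω)) {p q : ℕ}
    (hp : horizontalSteps ω z (minimalPeriod (step ω) z) = n * p)
    (hk : minimalPeriod (step ω) z = n * p + m * q) :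
    ∃ (x : ℤ → ℤ) (t₀ : ℤ), IsUpRightPath x ∧
      (∀ t, x (t + minimalPeriod (step ω) z) = x t + n * p) ∧
      ∀ t, ∃ r < minimalPeriod (step ω) z, (minimalPeriod (step ω) z : ℤ) ∣ t - t₀ - r ∧
        latticeProj n m (x t) t = (step ω)^[r] z := by
  have hk₀ : 0 < minimalPeriod (step ω) z := minimalPeriod_pos_of_mem_periodicPts hz
  have hper := isPeriodicPt_minimalPeriod (step ω) z
  generalize minimalPeriod (step ω) z = k at hp hk hk₀ hper ⊢
  obtain ⟨x₀, t₀, hz₀⟩ := exists_latticeProj_eq z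
  obtain ⟨G, hGnat, hGk⟩ := exists_int_extension hk₀ (g := fun i => x₀ + horizontalSteps ω z i)
    (c := n * p) fun i => by
      rw [add_comm i, horizontalSteps_add ω hper, hp]
      push_cast; ring
  have hG (r : ℕ) (j : ℤ) : G (r + j * k) = x₀ + horizontalSteps ω z r + j * (n * p) := by
    rw [add_mul_of_add_eq hGk, hGnat]
  refine ⟨fun t => G (t - t₀), t₀, fun t => ?_, fun t => ?_, fun t => ?_⟩
  · obtain ⟨r, -, j, ht⟩ := exists_nat_add_mul (t - t₀) hk₀
    dsimp only
    rw [show t + 1 - t₀ = ((r + 1 : ℕ) : ℤ) + j * k by push_cast; omega, ht, hG, hG,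
      horizontalSteps_succ]
    split_ifs
    · exact .inr (by push_cast; ring)
    · exact .inl (by push_cast; ring)
  · simp only [add_sub_right_comm, hGk]
  · obtain ⟨r, hr, j, ht⟩ := exists_nat_add_mul (t - t₀) hk₀
    refine ⟨r, hr, ⟨j, by rw [ht]; ring⟩, ?_⟩
    have hkz : (k : ℤ) = n * p + m * q := by exact_mod_cast hk
    dsimp only
    rw [← hz₀, iterate_step_latticeProj, hz₀, ht, hG, latticeProj_eq_latticeProj_iff]
    exact ⟨⟨-(j * p), by ring⟩, ⟨-(j * q), by linear_combination -ht - j * hkz⟩⟩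

lemma nonempty_cycleLift {C : Set (Torus n m)} (hC : C ∈ cycles ω) : Nonempty (CycleLift ω C) := by
  obtain ⟨z, hz, rfl⟩ := hC
  obtain ⟨p, q, hp, hk⟩ := exists_horizontalSteps_eq hz
  obtain ⟨x, t₀, hx, hxk, hproj⟩ := exists_lift hz hp hk
  refine ⟨x, p, q, _, hk, minimalPeriod_pos_of_mem_periodicPts hz, hx, hxk, fun t => ?_,
    fun t s hts => ?_, hasHomology_orbit hz hp hk⟩
  · obtain ⟨r, -, -, hr⟩ := hproj t
    exact ⟨r, hr.symm⟩
  · obtain ⟨r, hr, hdvd, hrt⟩ := hproj t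
    obtain ⟨r', hr', hdvd', hrs⟩ := hproj s
    obtain rfl : r = r' := iterate_injOn_Iio_minimalPeriod hr hr' (hrt.symm.trans (hts.trans hrs))
    simpa using dvd_sub hdvd hdvd'

end Walk

/-- Every cycle has a well-defined homology class `(p,q)` (so `n` divides its number
of horizontal steps and `m` its number of vertical steps), any two cycles have the
same homology class, and `p` and `q` are relatively prime. -/
theorem homology_class_well_defined (n m : ℕ) (hn : 0 < n) (hm : 0 < m)
    (ω : Torus n m → Bool) :
    ∃ p q : ℕ, Nat.Coprime p q ∧ ∀ C ∈ cycles ω, HasHomology ω C p q := by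
  obtain h | ⟨C₀, hC₀⟩ := (cycles ω).eq_empty_or_nonempty
  · exact ⟨1, 0, Nat.coprime_one_left 0, by simp [h]⟩
  obtain ⟨L₀⟩ := nonempty_cycleLift hC₀
  refine ⟨L₀.p, L₀.q, L₀.coprime, fun C hC => ?_⟩
  by_cases hCC₀ : C = C₀
  · exact hCC₀ ▸ L₀.hasHomology
  obtain ⟨L⟩ := nonempty_cycleLift hC
  have hdisj : Disjoint C C₀ :=
    Set.disjoint_left.mpr fun w hw hw₀ => hCC₀ (eq_of_mem_cycles hC hC₀ hw hw₀)
  obtain ⟨hp, hq⟩ := L.coprime.eq_of_mul_eq_mul L₀.coprime (L.p_mul_q_eq hn hm L₀ hdisj)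
  exact hp ▸ hq ▸ L.hasHomology
end

section
/- Fix ρ > 0 and let m : ℕ → ℕ be a sequence with (m(n) − n)/√n → ρ as n → ∞. Then there exists C > 0 such that for all sufficiently large n, on the torus T = (ZMod n) × (ZMod m(n)), the probability that N_{(1,1)}(ω) > C·n^{1/2} is at most exp(−C^{−1}·n^{1/2}). -/
open Function Filter

/-!
A cycle of class `(1,1)` has `n + m` points and meets the column `x = 0`, so it is traced by a
path of `n` horizontal and `m` vertical unit steps starting at one of the `m` points of that
column; there are at most `L = m·C(n+m, n) ≤ 3√n·2^{n+m}` such paths when `m ≤ 2n`. Distinct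
cycles are disjoint, and prescribing `k` disjoint cycles fixes `ω` on `k(n+m)` sites, so the
union bound gives `P(N_{(1,1)} ≥ k) ≤ C(L, k)·2^{-k(n+m)} ≤ (e·L / (k·2^{n+m}))^k`, which is at
most `e^{-k}` as soon as `k ≥ 3e²√n`.
-/

open scoped Finset Nat

section PeriodicOrbit

variable {α : Type*} {f : α → α} {z w : α}

theorem range_iterate_eq_image_Iio (hz : z ∈ periodicPts f) :
    Set.range (f^[·] z) = (f^[·] z) '' Set.Iio (minimalPeriod f z) := by
  refine (Set.image_subset_range _ _).antisymm' ?_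
  rintro _ ⟨i, rfl⟩
  exact ⟨i % minimalPeriod f z, Nat.mod_lt _ (minimalPeriod_pos_of_mem_periodicPts hz),
    iterate_mod_minimalPeriod_eq⟩

theorem range_iterate_eq_of_mem (hz : z ∈ periodicPts f) (hw : w ∈ Set.range (f^[·] z)) :
    Set.range (f^[·] w) = Set.range (f^[·] z) := by
  obtain ⟨i, rfl⟩ := hw
  obtain ⟨d, hd, hpd⟩ := mem_periodicPts.1 hz
  refine Set.Subset.antisymm ?_ ?_
  · rintro _ ⟨j, rfl⟩
    exact ⟨j + i, iterate_add_apply f j i z⟩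
  · rintro _ ⟨j, rfl⟩
    refine ⟨j + (i * d - i), ?_⟩
    dsimp only
    rw [← iterate_add_apply, add_assoc, Nat.sub_add_cancel (Nat.le_mul_of_pos_right i hd),
      iterate_add_apply, (hpd.const_mul i).eq]

theorem ncard_filter_range_iterate (hz : z ∈ periodicPts f) (p : α → Prop) [DecidablePred p] :
    {w ∈ Set.range (f^[·] z) | p w}.ncard =
      #{j ∈ Finset.range (minimalPeriod f z) | p (f^[j] z)} := by
  have himage : {w ∈ Set.range (f^[·] z) | p w} =
      (f^[·] z) '' ↑{j ∈ Finset.range (minimalPeriod f z) | p (f^[j] z)} := by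
    rw [range_iterate_eq_image_Iio hz]
    ext
    simp only [Set.mem_image, Set.mem_Iio, Finset.coe_filter,
      Finset.mem_range, Set.mem_ofPred_eq]
    constructor
    · rintro ⟨⟨j, hj, rfl⟩, hp⟩
      exact ⟨j, ⟨hj, hp⟩, rfl⟩
    · rintro ⟨j, ⟨hj, hp⟩, rfl⟩
      exact ⟨⟨j, hj, rfl⟩, hp⟩
  rw [himage, (iterate_injOn_Iio_minimalPeriod.mono _).ncard_image, Set.ncard_coe_finset]
  intro j
  simp +contextual

end PeriodicOrbit

theorem Nat.exists_eq_of_le_of_le_add_one {g : ℕ → ℕ} (h0 : g 0 = 0)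
    (hsucc : ∀ i, g (i + 1) ≤ g i + 1) {r M : ℕ} (hr : r ≤ g M) : ∃ i, g i = r := by
  induction M with
  | zero => exact ⟨0, by omega⟩
  | succ M ih =>
    by_cases h : r ≤ g M
    · exact ih h
    · exact ⟨M + 1, by have := hsucc M; omega⟩

section WitnessCounting

variable {α β : Type*} [Fintype α]

theorem ncard_mul_two_pow_le_of_eqOn (P : Finset α) (S : Set (α → Bool))
    (hS : ∀ ω ∈ S, ∀ ω' ∈ S, ∀ x ∈ P, ω x = ω' x) :
    S.ncard * 2 ^ #P ≤ 2 ^ Fintype.card α := by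
  classical
  have hrestrict : Set.InjOn (fun ω (x : ↥(Pᶜ : Finset α)) => ω x.1) S := by
    intro ω hω ω' hω' h
    funext x
    by_cases hx : x ∈ P
    · exact hS ω hω ω' hω' x hx
    · exact congrFun h ⟨x, Finset.mem_compl.2 hx⟩
  have hle : S.ncard ≤ 2 ^ (Fintype.card α - #P) := by
    have := Set.ncard_le_ncard_of_injOn _ (fun _ _ => Set.mem_univ _) hrestrict
    rwa [Set.ncard_univ, Nat.card_eq_fintype_card, Fintype.card_fun, Fintype.card_bool,
      Fintype.card_coe, Finset.card_compl] at this
  calc S.ncard * 2 ^ #P ≤ 2 ^ (Fintype.card α - #P) * 2 ^ #P := Nat.mul_le_mul_right _ hle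
    _ = 2 ^ Fintype.card α := by rw [← pow_add, Nat.sub_add_cancel (Finset.card_le_univ P)]

theorem ncard_mul_two_pow_le_of_disjoint_witnesses (G : Finset β)
    (supp : β → Finset α) (Agrees : β → (α → Bool) → Prop)
    (hdet : ∀ b ω ω', Agrees b ω → Agrees b ω' → ∀ x ∈ supp b, ω x = ω' x)
    (s k : ℕ) (A : Set (α → Bool))
    (hA : ∀ ω ∈ A, ∃ T ⊆ G, #T = k ∧ (∀ b ∈ T, #(supp b) = s) ∧
      (T : Set β).PairwiseDisjoint supp ∧ ∀ b ∈ T, Agrees b ω) :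
    A.ncard * 2 ^ (k * s) ≤ (#G).choose k * 2 ^ Fintype.card α := by
  classical
  let W : Finset (Finset β) := {T ∈ G.powersetCard k |
    (∀ b ∈ T, #(supp b) = s) ∧ (T : Set β).PairwiseDisjoint supp}
  let E (T : Finset β) : Set (α → Bool) := {ω | ∀ b ∈ T, Agrees b ω}
  have hcover : A ⊆ ⋃ T ∈ W, E T := by
    intro ω hω
    obtain ⟨T, hTG, hTk, hTs, hTdisj, hTω⟩ := hA ω hω
    exact Set.mem_biUnion
      (Finset.mem_filter.2 ⟨Finset.mem_powersetCard.2 ⟨hTG, hTk⟩, hTs, hTdisj⟩) hTω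
  have hE : ∀ T ∈ W, (E T).ncard * 2 ^ (k * s) ≤ 2 ^ Fintype.card α := by
    intro T hT
    simp only [W, Finset.mem_filter, Finset.mem_powersetCard] at hT
    obtain ⟨⟨-, hTk⟩, hTs, hTdisj⟩ := hT
    have hcard : #(T.biUnion supp) = k * s := by
      rw [Finset.card_biUnion hTdisj, Finset.sum_congr rfl hTs, Finset.sum_const, hTk,
        smul_eq_mul]
    rw [← hcard]
    refine ncard_mul_two_pow_le_of_eqOn _ _ fun ω hω ω' hω' x hx => ?_
    obtain ⟨b, hb, hxb⟩ := Finset.mem_biUnion.1 hx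
    exact hdet b ω ω' (hω b hb) (hω' b hb) x hxb
  calc A.ncard * 2 ^ (k * s) ≤ (∑ T ∈ W, (E T).ncard) * 2 ^ (k * s) :=
        Nat.mul_le_mul_right _
          ((Set.ncard_le_ncard hcover (Set.toFinite _)).trans (W.set_ncard_biUnion_le E))
    _ ≤ ∑ _T ∈ W, 2 ^ Fintype.card α := by rw [Finset.sum_mul]; exact Finset.sum_le_sum hE
    _ ≤ (#G).choose k * 2 ^ Fintype.card α := by
        rw [Finset.sum_const, smul_eq_mul, ← Finset.card_powersetCard]
        exact Nat.mul_le_mul_right _ (Finset.card_filter_le _ _)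

end WitnessCounting

section TorusPaths

variable {n m : ℕ}

/-- A path of `n + m` unit steps starting on the column `x = 0`, encoded by its starting height
and its word of directions (`true` for a horizontal step). -/
abbrev PathCode (n m : ℕ) := ZMod m × (Fin (n + m) → Bool)

namespace PathCode

def dir (c : PathCode n m) (i : ℕ) : Bool :=
  if h : i < n + m then c.2 ⟨i, h⟩ else false

def path (c : PathCode n m) : ℕ → Torus n m
  | 0 => (0, c.1)
  | i + 1 => step (fun _ => c.dir i) (c.path i)

def support (c : PathCode n m) : Finset (Torus n m) :=
  (Finset.range (n + m)).image c.path

def Agrees (c : PathCode n m) (ω : Torus n m → Bool) : Prop :=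
  ∀ i < n + m, ω (c.path i) = c.dir i

variable (n m) in
def balanced [NeZero m] : Finset (PathCode n m) :=
  {c | #{i | c.2 i = true} = n}

theorem card_balanced_le [NeZero m] : #(balanced n m) ≤ m * (n + m).choose n := by
  have hinj : Function.Injective
      (fun c : PathCode n m => (c.1, ({i | c.2 i = true} : Finset (Fin (n + m))))) := by
    rintro ⟨y, w⟩ ⟨y', w'⟩ h
    simp only [Prod.mk.injEq] at h
    refine Prod.ext h.1 (funext fun i => Bool.eq_iff_iff.2 ?_)
    simpa using congr(i ∈ $(h.2))
  have hmaps : ∀ c ∈ balanced n m, (c.1, ({i | c.2 i = true} : Finset (Fin (n + m)))) ∈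
      (Finset.univ : Finset (ZMod m)) ×ˢ (Finset.univ : Finset (Fin (n + m))).powersetCard n := by
    intro c hc
    simpa [balanced] using hc
  simpa using Finset.card_le_card_of_injOn _ hmaps hinj.injOn

end PathCode

variable (ω : Torus n m → Bool)

theorem step_iterate_fst (z : Torus n m) (i : ℕ) :
    ((step ω)^[i] z).1 = z.1 + #{j ∈ Finset.range i | ω ((step ω)^[j] z) = true} := by
  induction i with
  | zero => simp
  | succ i ih =>
    rw [iterate_succ_apply', Finset.card_filter, Finset.sum_range_succ, ← Finset.card_filter,
      step]
    split <;> simp_all [add_assoc]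

theorem exists_iterate_fst_eq_zero [NeZero n] (z : Torus n m) {M : ℕ}
    (hM : #{j ∈ Finset.range M | ω ((step ω)^[j] z) = true} = n) :
    ∃ i, ((step ω)^[i] z).1 = 0 := by
  obtain ⟨i, hi⟩ := Nat.exists_eq_of_le_of_le_add_one
    (g := fun i => #{j ∈ Finset.range i | ω ((step ω)^[j] z) = true}) (by simp)
    (fun i => by
      simp only [Finset.card_filter, Finset.sum_range_succ]
      split <;> omega)
    (M := M) (r := (-z.1).val) (by rw [hM]; exact (ZMod.val_lt _).le)
  refine ⟨i, ?_⟩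
  rw [step_iterate_fst, hi, ZMod.natCast_zmod_val, add_neg_cancel]

theorem minimalPeriod_step_of_hasHomology {z : Torus n m} (hz : z ∈ periodicPts (step ω))
    (hH : HasHomology ω (Set.range ((step ω)^[·] z)) 1 1) :
    minimalPeriod (step ω) z = n + m ∧
      #{j ∈ Finset.range (n + m) | ω ((step ω)^[j] z) = true} = n := by
  have htrue := (ncard_filter_range_iterate hz (ω · = true)).symm.trans hH.1
  have hfalse := (ncard_filter_range_iterate hz (ω · = false)).symm.trans hH.2
  rw [mul_one] at htrue hfalse
  have hd : minimalPeriod (step ω) z = n + m := by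
    rw [← Finset.card_range (minimalPeriod (step ω) z),
      ← Finset.card_filter_add_card_filter_not (fun j => ω ((step ω)^[j] z) = true)]
    simp only [Bool.not_eq_true]
    rw [htrue, hfalse]
  exact ⟨hd, hd ▸ htrue⟩

theorem exists_pathCode_of_fst_eq_zero [NeZero m] {z : Torus n m}
    (hz : z ∈ periodicPts (step ω)) (hz0 : z.1 = 0) (hd : minimalPeriod (step ω) z = n + m)
    (htrue : #{j ∈ Finset.range (n + m) | ω ((step ω)^[j] z) = true} = n) :
    ∃ c ∈ PathCode.balanced n m, (c.support : Set (Torus n m)) = Set.range ((step ω)^[·] z) ∧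
      #c.support = n + m ∧ c.Agrees ω := by
  let c : PathCode n m := (z.2, fun j => ω ((step ω)^[j] z))
  have hdir : ∀ j < n + m, c.dir j = ω ((step ω)^[j] z) := fun j hj => dif_pos hj
  have hpath : ∀ j ≤ n + m, c.path j = (step ω)^[j] z := by
    intro j hj
    induction j with
    | zero => exact Prod.ext hz0.symm rfl
    | succ j ih =>
      change step (fun _ => c.dir j) (c.path j) = _
      rw [iterate_succ_apply', hdir j (by omega), ih (by omega)]
      rfl
  have hinj : Set.InjOn c.path (Finset.range (n + m)) := by
    intro a ha b hb hab
    simp only [Finset.coe_range, Set.mem_Iio] at ha hb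
    rw [hpath a ha.le, hpath b hb.le] at hab
    exact iterate_injOn_Iio_minimalPeriod (hd ▸ ha) (hd ▸ hb) hab
  refine ⟨c, ?_, ?_, ?_, ?_⟩
  · simp only [PathCode.balanced, Finset.mem_filter, Finset.mem_univ, true_and]
    rw [Finset.card_filter, Fin.sum_univ_eq_sum_range (fun j => if ω ((step ω)^[j] z) then 1 else 0),
      ← Finset.card_filter, htrue]
  · rw [PathCode.support, Finset.coe_image, Finset.coe_range,
      Set.image_congr fun j hj => hpath j (Set.mem_Iio.1 hj).le, range_iterate_eq_image_Iio hz, hd]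
  · rw [PathCode.support, Finset.card_image_of_injOn hinj, Finset.card_range]
  · intro j hj
    rw [hpath j hj.le, hdir j hj]

theorem exists_pathCode_of_mem_cycles [NeZero n] [NeZero m] {C : Set (Torus n m)}
    (hC : C ∈ cycles ω) (hH : HasHomology ω C 1 1) :
    ∃ c ∈ PathCode.balanced n m, (c.support : Set (Torus n m)) = C ∧
      #c.support = n + m ∧ c.Agrees ω := by
  obtain ⟨z, hz, rfl⟩ := hC
  change HasHomology ω (Set.range ((step ω)^[·] z)) 1 1 at hH
  obtain ⟨-, htrue⟩ := minimalPeriod_step_of_hasHomology ω hz hH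
  obtain ⟨i, hi⟩ := exists_iterate_fst_eq_zero ω z htrue
  have hzi : (step ω)^[i] z ∈ periodicPts (step ω) := by
    rw [← minimalPeriod_pos_iff_mem_periodicPts, minimalPeriod_apply_iterate hz]
    exact minimalPeriod_pos_of_mem_periodicPts hz
  have hrange : Set.range ((step ω)^[·] ((step ω)^[i] z)) = Set.range ((step ω)^[·] z) :=
    range_iterate_eq_of_mem hz ⟨i, rfl⟩
  rw [← hrange] at hH
  obtain ⟨hd, htrue⟩ := minimalPeriod_step_of_hasHomology ω hzi hH
  change ∃ c ∈ _, _ = Set.range ((step ω)^[·] z) ∧ _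
  rw [← hrange]
  exact exists_pathCode_of_fst_eq_zero ω hzi hi hd htrue

end TorusPaths

section CycleCounting

variable {n m : ℕ}

theorem PathCode.Agrees.eq_of_mem_support {c : PathCode n m} {ω ω' : Torus n m → Bool}
    (h : c.Agrees ω) (h' : c.Agrees ω') {x : Torus n m} (hx : x ∈ c.support) : ω x = ω' x := by
  obtain ⟨i, hi, rfl⟩ := Finset.mem_image.1 hx
  rw [h i (Finset.mem_range.1 hi), h' i (Finset.mem_range.1 hi)]

theorem cycles_pairwiseDisjoint (ω : Torus n m → Bool) : (cycles ω).PairwiseDisjoint id := by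
  rintro _ ⟨z, hz, rfl⟩ _ ⟨z', hz', rfl⟩ hne
  refine Set.disjoint_left.2 fun w hw hw' => hne ?_
  exact (range_iterate_eq_of_mem hz hw).symm.trans (range_iterate_eq_of_mem hz' hw')

theorem exists_disjoint_pathCodes [NeZero n] [NeZero m] (ω : Torus n m → Bool) {k : ℕ}
    (hk : k ≤ numCyclesPQ ω 1 1) :
    ∃ T ⊆ PathCode.balanced n m, #T = k ∧ (∀ c ∈ T, #c.support = n + m) ∧
      (T : Set (PathCode n m)).PairwiseDisjoint PathCode.support ∧ ∀ c ∈ T, c.Agrees ω := by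
  classical
  set S := {C ∈ cycles ω | HasHomology ω C 1 1}
  have hcode : ∀ C, ∃ c : PathCode n m, C ∈ S → c ∈ PathCode.balanced n m ∧
      (c.support : Set (Torus n m)) = C ∧ #c.support = n + m ∧ c.Agrees ω := by
    intro C
    by_cases hC : C ∈ S
    · obtain ⟨c, hc⟩ := exists_pathCode_of_mem_cycles ω hC.1 hC.2
      exact ⟨c, fun _ => hc⟩
    · exact ⟨(0, fun _ => false), fun h => absurd h hC⟩
  choose g hg using hcode
  obtain ⟨S', hS'S, hS'k⟩ := Set.exists_subset_card_eq hk
  have hS' : ∀ C ∈ (Set.toFinite S').toFinset, C ∈ S := fun C hC =>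
    hS'S ((Set.toFinite S').mem_toFinset.1 hC)
  have hginj : Set.InjOn g S := fun C hC C' hC' h =>
    (hg C hC).2.1.symm.trans (h ▸ (hg C' hC').2.1)
  refine ⟨(Set.toFinite S').toFinset.image g, ?_, ?_, ?_, ?_, ?_⟩
  · exact Finset.image_subset_iff.2 fun C hC => (hg C (hS' C hC)).1
  · rw [Finset.card_image_of_injOn (hginj.mono hS'), ← Set.ncard_eq_toFinset_card _, hS'k]
  · exact Finset.forall_mem_image.2 fun C hC => (hg C (hS' C hC)).2.2.1
  · rw [Finset.coe_image]
    rintro _ ⟨C, hC, rfl⟩ _ ⟨C', hC', rfl⟩ hne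
    rw [onFun, ← Finset.disjoint_coe, (hg C (hS' C hC)).2.1, (hg C' (hS' C' hC')).2.1]
    exact cycles_pairwiseDisjoint ω (hS' C hC).1 (hS' C' hC').1 fun h => hne (congrArg g h)
  · exact Finset.forall_mem_image.2 fun C hC => (hg C (hS' C hC)).2.2.2

theorem ncard_numCyclesPQ_ge_mul_two_pow_le [NeZero n] [NeZero m] (k : ℕ) :
    {ω : Torus n m → Bool | k ≤ numCyclesPQ ω 1 1}.ncard * 2 ^ (k * (n + m)) ≤
      (m * (n + m).choose n).choose k * 2 ^ (n * m) := by
  have h := ncard_mul_two_pow_le_of_disjoint_witnesses (PathCode.balanced n m)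
    PathCode.support PathCode.Agrees (fun _ _ _ h h' _ hx => h.eq_of_mem_support h' hx)
    (n + m) k _ fun ω hω => exists_disjoint_pathCodes ω hω
  rw [Fintype.card_prod, ZMod.card, ZMod.card] at h
  exact h.trans (Nat.mul_le_mul_right _ (Nat.choose_le_choose k PathCode.card_balanced_le))

end CycleCounting

theorem Nat.centralBinom_sq_mul_le (s : ℕ) : centralBinom s ^ 2 * (3 * s + 1) ≤ 16 ^ s := by
  induction s with
  | zero => simp
  | succ s ih =>
    have hrec := Nat.succ_mul_centralBinom_succ s
    refine Nat.le_of_mul_le_mul_left ?_ (by positivity : 0 < (s + 1) ^ 2)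
    calc (s + 1) ^ 2 * (centralBinom (s + 1) ^ 2 * (3 * (s + 1) + 1))
        = centralBinom s ^ 2 * (4 * (2 * s + 1) ^ 2 * (3 * s + 4)) := by
          rw [← mul_assoc, ← mul_pow, hrec]; ring
      _ ≤ centralBinom s ^ 2 * (16 * (s + 1) ^ 2 * (3 * s + 1)) := by
          exact Nat.mul_le_mul_left _ (by ring_nf; nlinarith)
      _ ≤ 16 ^ s * (16 * (s + 1) ^ 2) := by
          rw [← mul_assoc, mul_comm _ (3 * s + 1), ← mul_assoc, mul_comm (3 * s + 1)]
          exact Nat.mul_le_mul_right _ ih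
      _ = (s + 1) ^ 2 * 16 ^ (s + 1) := by ring

theorem Nat.choose_sq_mul_le (N j : ℕ) : N.choose j ^ 2 * N ≤ 4 ^ (N + 1) := by
  set s := (N + 1) / 2
  have hchoose : N.choose j ≤ centralBinom s :=
    (Nat.choose_le_choose j (by omega : N ≤ 2 * s)).trans (choose_le_centralBinom j s)
  calc N.choose j ^ 2 * N ≤ centralBinom s ^ 2 * (3 * s + 1) := by gcongr; omega
    _ ≤ 16 ^ s := centralBinom_sq_mul_le s
    _ = 4 ^ (2 * s) := by rw [pow_mul]; norm_num
    _ ≤ 4 ^ (N + 1) := Nat.pow_le_pow_right (by norm_num) (by omega)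

theorem sq_mul_choose_le_of_le_two_mul {n m : ℕ} (hm : m ≤ 2 * n) :
    (m * (n + m).choose n) ^ 2 ≤ 9 * n * 4 ^ (n + m) := by
  rcases Nat.eq_zero_or_pos m with rfl | hm0
  · simp
  refine Nat.le_of_mul_le_mul_right ?_ (by omega : 0 < n + m)
  calc (m * (n + m).choose n) ^ 2 * (n + m) = m ^ 2 * ((n + m).choose n ^ 2 * (n + m)) := by
        ring
    _ ≤ m ^ 2 * 4 ^ (n + m + 1) := Nat.mul_le_mul_left _ (Nat.choose_sq_mul_le _ _)
    _ = 4 * m ^ 2 * 4 ^ (n + m) := by ring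
    _ ≤ 9 * n * (n + m) * 4 ^ (n + m) := Nat.mul_le_mul_right _ (by nlinarith)
    _ = 9 * n * 4 ^ (n + m) * (n + m) := by ring

theorem mul_choose_le_sqrt_mul_two_pow {n m : ℕ} (hm : m ≤ 2 * n) :
    ((m * (n + m).choose n : ℕ) : ℝ) ≤ 3 * √n * 2 ^ (n + m) := by
  rw [← pow_le_pow_iff_left₀ (by positivity) (by positivity) two_ne_zero, mul_pow, mul_pow,
    Real.sq_sqrt (by positivity), ← pow_mul, pow_mul']
  exact_mod_cast (sq_mul_choose_le_of_le_two_mul hm).trans_eq (by norm_num)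

theorem Nat.choose_le_exp_one_mul_div_pow (L k : ℕ) :
    (L.choose k : ℝ) ≤ (Real.exp 1 * L / k) ^ k := by
  rcases Nat.eq_zero_or_pos k with rfl | hk
  · simp
  have hk' : (0 : ℝ) < k := by exact_mod_cast hk
  calc (L.choose k : ℝ) ≤ (L : ℝ) ^ k / k ! := Nat.choose_le_pow_div k L
    _ = (L / k : ℝ) ^ k * ((k : ℝ) ^ k / k !) := by rw [div_pow]; field_simp
    _ ≤ (L / k : ℝ) ^ k * Real.exp k := by
        gcongr; exact Real.pow_div_factorial_le_exp _ hk'.le k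
    _ = (Real.exp 1 * L / k) ^ k := by
        rw [← Real.exp_one_pow, ← mul_pow]; ring

theorem prob_numCyclesPQ_gt_le {n m : ℕ} [NeZero n] [NeZero m] (hm : m ≤ 2 * n) {C : ℝ}
    (hC : 3 * Real.exp 1 ^ 2 ≤ C) :
    prob (n := n) (m := m) (fun ω => C * √n < (numCyclesPQ ω 1 1 : ℝ)) ≤
      Real.exp (-C⁻¹ * √n) := by
  have he : 0 < Real.exp 1 := Real.exp_pos 1
  have hC1 : 1 ≤ C := le_trans (by nlinarith [Real.add_one_le_exp 1]) hC
  set k := ⌊C * √n⌋₊ + 1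
  have hk : C * √n < k := by simpa [k] using Nat.lt_floor_add_one (C * √n)
  have hk0 : (0 : ℝ) < k := by positivity
  set L := m * (n + m).choose n
  have hevent : {ω : Torus n m → Bool | C * √n < (numCyclesPQ ω 1 1 : ℝ)} ⊆
      {ω | k ≤ numCyclesPQ ω 1 1} := fun ω hω =>
    Nat.add_one_le_iff.2 ((Nat.floor_lt (by positivity)).2 hω)
  have hcount : ({ω : Torus n m → Bool | k ≤ numCyclesPQ ω 1 1}.ncard : ℝ) / 2 ^ (n * m) ≤
      (L.choose k : ℝ) / (2 ^ (n + m)) ^ k := by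
    rw [div_le_div_iff₀ (by positivity) (by positivity), ← pow_mul, mul_comm (n + m)]
    exact_mod_cast ncard_numCyclesPQ_ge_mul_two_pow_le k
  have hratio : Real.exp 1 * L / k ≤ Real.exp (-1) * 2 ^ (n + m) := by
    rw [div_le_iff₀ hk0, Real.exp_neg]
    calc Real.exp 1 * L ≤ Real.exp 1 * (3 * √n * 2 ^ (n + m)) :=
          mul_le_mul_of_nonneg_left (mul_choose_le_sqrt_mul_two_pow hm) he.le
      _ = (Real.exp 1)⁻¹ * 2 ^ (n + m) * (3 * Real.exp 1 ^ 2 * √n) := by field_simp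
      _ ≤ (Real.exp 1)⁻¹ * 2 ^ (n + m) * k := by gcongr; nlinarith [Real.sqrt_nonneg n]
  calc prob (n := n) (m := m) (fun ω => C * √n < (numCyclesPQ ω 1 1 : ℝ))
      ≤ ({ω : Torus n m → Bool | k ≤ numCyclesPQ ω 1 1}.ncard : ℝ) / 2 ^ (n * m) := by
        unfold prob
        gcongr
        exact Set.toFinite _
    _ ≤ (Real.exp 1 * L / k) ^ k / (2 ^ (n + m)) ^ k :=
        hcount.trans (by gcongr; exact Nat.choose_le_exp_one_mul_div_pow L k)
    _ ≤ (Real.exp (-1) * 2 ^ (n + m)) ^ k / (2 ^ (n + m)) ^ k := by gcongr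
    _ = Real.exp (-k) := by
        rw [mul_pow, mul_div_assoc, div_self (by positivity), mul_one, ← Real.exp_nat_mul]
        ring_nf
    _ ≤ Real.exp (-C⁻¹ * √n) := by
        gcongr
        nlinarith [inv_le_one_of_one_le₀ hC1, Real.sqrt_nonneg n]

theorem eventually_pos_lt_le_two_mul {ρ : ℝ} (hρ : 0 < ρ) {m : ℕ → ℕ}
    (hm : Tendsto (fun n : ℕ => ((m n : ℝ) - n) / √n) atTop (nhds ρ)) :
    ∀ᶠ n : ℕ in atTop, 0 < n ∧ n < m n ∧ m n ≤ 2 * n := by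
  have hsmall : Tendsto (fun n : ℕ => ((m n : ℝ) - n) / √n / √n) atTop (nhds 0) :=
    hm.div_atTop (Real.tendsto_sqrt_atTop.comp tendsto_natCast_atTop_atTop)
  filter_upwards [hm.eventually (lt_mem_nhds hρ), hsmall.eventually (gt_mem_nhds one_pos),
    eventually_gt_atTop 0] with n hpos hlt hn
  have hsqrt : (0 : ℝ) < √n := Real.sqrt_pos.2 (by exact_mod_cast hn)
  rw [div_div, Real.mul_self_sqrt (Nat.cast_nonneg n), div_lt_one (by exact_mod_cast hn)] at hlt
  have : (n : ℝ) < m n := by linarith [(div_pos_iff_of_pos_right hsqrt).1 hpos]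
  exact ⟨hn, by exact_mod_cast this, by exact_mod_cast (by linarith : (m n : ℝ) ≤ 2 * n)⟩

/-- Primary spike, upper bound: if `m(n) = n + ρ√n(1+o(1))` with `ρ > 0`, then there
is `C > 0` with `P(N_{(1,1)} > C n^{1/2}) ≤ exp(-C⁻¹ n^{1/2})` for large `n`. -/
theorem primary_spike_upper (ρ : ℝ) (hρ : 0 < ρ) (m : ℕ → ℕ)
    (hm : Tendsto (fun n : ℕ => ((m n : ℝ) - n) / Real.sqrt n) atTop (nhds ρ)) :
    ∃ C > 0, ∀ᶠ n : ℕ in atTop,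
      prob (n := n) (m := m n)
          (fun ω => C * Real.sqrt n < (numCyclesPQ ω 1 1 : ℝ)) ≤
        Real.exp (-C⁻¹ * Real.sqrt n) := by
  refine ⟨3 * Real.exp 1 ^ 2, by positivity, ?_⟩
  filter_upwards [eventually_pos_lt_le_two_mul hρ hm] with n ⟨hn, hnm, hm2⟩
  have : NeZero n := ⟨hn.ne'⟩
  have : NeZero (m n) := ⟨by omega⟩
  exact prob_numCyclesPQ_gt_le hm2 le_rfl
end

section
/- Fix constants C > 1 and ε > 0. There exist c > 0 and n₀ such that for all n ≥ n₀ and all integers m with n < m < C·n the following holds. Let a_i and p_j/q_j denote the partial quotients and convergents of the continued fraction expansion of m/n, and let j be such that q_j ≤ n^{1/3 − ε/2} < q_{j+1}. If a_j < n^{ε/2} and a_{j+1} ≤ n^{ε/4}, then, on the torus T = (ZMod n) × (ZMod m), the probability that φ_ω has a cycle of length at most n^{4/3 − ε} is at most exp(−c·n^{ε/2}). -/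
/-!
A cycle of length `k` is a self-avoiding closed lattice path with `h` horizontal steps, where
`n ∣ h` and `m ∣ k - h`. Fixing its start and its step pattern fixes `ω` at `k` distinct sites,
an event of probability `2^{-k}`, so the union bound gives at most `nm ∑ C(k,h)/2^k` over
admissible `(k,h)`. Writing `h = pn` and `k - h = Qm`, a short cycle has `Q < q_{j+1}`, and the
best approximation property of convergents gives `|k - 2h| = |Qm - pn| ≥ n/(q_j + q_{j+1})`,
which is `≥ n^{2/3+ε/4}/3` because `a_{j+1}` is small. The binomial tail
`C(k,h) ≤ 2^k exp(-((k-2h)^2 - 1)/(4k))` then bounds each term by `exp(-n^{3ε/2}/72)`, which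
beats the polynomially many terms.
-/

open Function Filter

/-- Partial quotients of `m/n` via the Euclidean algorithm:
`cfQuots n m = [a₀, a₁, …, a_l]` where `m/n = a₀ + 1/(a₁ + 1/(⋯ + 1/a_l))`. -/
def cfQuots : ℕ → ℕ → List ℕ
  | 0, _ => []
  | (n+1), m => (m / (n+1)) :: cfQuots (m % (n+1)) (n+1)
  termination_by n _ => n
  decreasing_by exact Nat.mod_lt _ (Nat.succ_pos _)

/-- Auxiliary recursion for the convergents: `p_j = a_j p_{j-1} + p_{j-2}`,
`q_j = a_j q_{j-1} + q_{j-2}`, starting from `(p_{-2},q_{-2}) = (0,1)` and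
`(p_{-1},q_{-1}) = (1,0)`. -/
def convAux : List ℕ → ℕ × ℕ → ℕ × ℕ → List (ℕ × ℕ)
  | [], _, _ => []
  | a :: as, p2, p1 =>
    (a * p1.1 + p2.1, a * p1.2 + p2.2) :: convAux as p1 (a * p1.1 + p2.1, a * p1.2 + p2.2)

/-- The list of convergents `(p_j, q_j)`, `j = 0, 1, …, l`, of `m/n` (in lowest terms). -/
def convergents (n m : ℕ) : List (ℕ × ℕ) :=
  convAux (cfQuots n m) (0, 1) (1, 0)

theorem le_abs_mul_sub_mul {N M p q p' q' d d' P Q : ℤ} (s u : ℤˣ) (hd : 0 ≤ d) (hd' : 0 ≤ d')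
    (h : q * M - p * N = s * d) (h' : q' * M - p' * N = -s * d') (hdet : p * q' - p' * q = u)
    (hq : 0 < q) (hQ : 0 < Q) (hQq' : Q < q') : d ≤ |Q * M - P * N| := by
  have hu : (u : ℤ) * u = 1 := by rw [← Units.val_mul, Int.units_mul_self, Units.val_one]
  -- Unimodularity writes `(P, Q)` in the basis `(p, q)`, `(p', q')`; as `0 < Q < q'` the
  -- coefficients have opposite signs, so the two residues add up.
  set α := u * (P * q' - p' * Q)
  set β := u * (p * Q - P * q)
  have hP : P = α * p + β * p' := by linear_combination (-P) * hu - P * u * hdet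
  have hQαβ : Q = α * q + β * q' := by linear_combination (-Q) * hu - Q * u * hdet
  have hform : Q * M - P * N = s * (α * d - β * d') := by
    linear_combination α * h + β * h' + M * hQαβ - N * hP
  have hα : α ≠ 0 := by
    rintro hα
    rw [hα, zero_mul, zero_add] at hQαβ
    rcases le_or_gt β 0 with hβ | hβ <;> nlinarith
  rw [hform, abs_mul, Int.isUnit_iff_abs_eq.1 s.isUnit, one_mul]
  rcases lt_or_gt_of_ne hα with hα | hα
  · have hβ : 0 ≤ β := by nlinarith
    rw [abs_of_nonpos (by nlinarith)]
    nlinarith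
  · have hβ : β ≤ 0 := by nlinarith
    rw [abs_of_nonneg (by nlinarith)]
    nlinarith

/-- A state of the Euclidean algorithm together with the last two convergents:
`x = r_{j-1}`, `y = r_{j-2}`, `prev = (p_{j-2}, q_{j-2})`, `cur = (p_{j-1}, q_{j-1})`. -/
structure EuclidState where
  x : ℕ
  y : ℕ
  prev : ℕ × ℕ
  cur : ℕ × ℕ

namespace EuclidState

def next (σ : EuclidState) : EuclidState :=
  ⟨σ.y % σ.x, σ.x, σ.cur, (σ.y / σ.x * σ.cur.1 + σ.prev.1, σ.y / σ.x * σ.cur.2 + σ.prev.2)⟩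

def quots (σ : EuclidState) : List ℕ := cfQuots σ.x σ.y

def convs (σ : EuclidState) : List (ℕ × ℕ) := convAux σ.quots σ.prev σ.cur

theorem quots_of_pos {σ : EuclidState} (h : 0 < σ.x) : σ.quots = σ.y / σ.x :: σ.next.quots := by
  obtain ⟨x, y, _, _⟩ := σ
  obtain ⟨x, rfl⟩ := Nat.exists_eq_add_one_of_ne_zero h.ne'
  rw [quots, cfQuots]
  rfl

theorem convs_of_pos {σ : EuclidState} (h : 0 < σ.x) : σ.convs = σ.next.cur :: σ.next.convs := by
  rw [convs, quots_of_pos h]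
  rfl

theorem pos_of_quots_ne_nil {σ : EuclidState} (h : σ.quots ≠ []) : 0 < σ.x := by
  refine Nat.pos_of_ne_zero fun hx => h ?_
  rw [quots, hx, cfQuots]

theorem exists_of_getElem?_succ {I : EuclidState → Prop} (hI : ∀ σ, I σ → 0 < σ.x → I σ.next)
    {a' : ℕ} {P P' : ℕ × ℕ} (j : ℕ) {σ : EuclidState} (hσ : I σ) (ha : σ.quots[j + 1]? = some a')
    (hP : σ.convs[j]? = some P) (hP' : σ.convs[j + 1]? = some P') :
    ∃ τ, I τ ∧ 0 < τ.x ∧ 0 < τ.next.x ∧ τ.next.y / τ.next.x = a' ∧ τ.next.cur = P ∧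
      τ.next.next.cur = P' := by
  induction j generalizing σ with
  | zero =>
    have hx := pos_of_quots_ne_nil (σ := σ) (by rintro h; simp [h] at ha)
    rw [quots_of_pos hx, List.getElem?_cons_succ] at ha
    rw [convs_of_pos hx, List.getElem?_cons_zero, Option.some_inj] at hP
    have hx' := pos_of_quots_ne_nil (σ := σ.next) (by rintro h; simp [h] at ha)
    rw [quots_of_pos hx', List.getElem?_cons_zero, Option.some_inj] at ha
    rw [convs_of_pos hx, List.getElem?_cons_succ, convs_of_pos hx', List.getElem?_cons_zero,
      Option.some_inj] at hP'
    exact ⟨σ, hσ, hx, hx', ha, hP, hP'⟩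
  | succ j ih =>
    have hx := pos_of_quots_ne_nil (σ := σ) (by rintro h; simp [h] at ha)
    rw [quots_of_pos hx, List.getElem?_cons_succ] at ha
    rw [convs_of_pos hx, List.getElem?_cons_succ] at hP hP'
    exact ih (hI σ hσ hx) ha hP hP'

/-- The classical identities between the remainders and the convergents of `M/N`; the sign is
`s = (-1)^j`. -/
structure Invariant (N M : ℕ) (σ : EuclidState) : Prop where
  x_lt_y : σ.x < σ.y
  sign : ∃ s : ℤˣ, (σ.prev.2 * M - σ.prev.1 * N : ℤ) = s * σ.y ∧
    (σ.cur.2 * M - σ.cur.1 * N : ℤ) = -s * σ.x ∧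
    (σ.prev.1 * σ.cur.2 - σ.cur.1 * σ.prev.2 : ℤ) = -s
  cross : σ.cur.2 * σ.y + σ.prev.2 * σ.x = N
  denom_pos : 0 < σ.cur.2 + σ.prev.2

def start (N M : ℕ) : EuclidState := ⟨N, M, (0, 1), (1, 0)⟩

theorem invariant_start {N M : ℕ} (h : N < M) : Invariant N M (start N M) :=
  ⟨h, ⟨1, by simp [start]⟩, by simp [start], by simp [start]⟩

theorem Invariant.next {N M : ℕ} {σ : EuclidState} (hσ : Invariant N M σ) (hx : 0 < σ.x) :
    Invariant N M σ.next := by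
  obtain ⟨s, h₂, h₁, hdet⟩ := hσ.sign
  have hdiv : (σ.x : ℤ) * (σ.y / σ.x : ℕ) + (σ.y % σ.x : ℕ) = σ.y := by
    exact_mod_cast Nat.div_add_mod σ.y σ.x
  refine ⟨Nat.mod_lt _ hx, ⟨-s, ?_, ?_, ?_⟩, ?_, ?_⟩
  · simpa [EuclidState.next] using h₁
  · simp only [EuclidState.next, Nat.cast_add, Nat.cast_mul, Units.val_neg]
    linear_combination (σ.y / σ.x : ℕ) * h₁ + h₂ - s * hdiv
  · simp only [EuclidState.next, Nat.cast_add, Nat.cast_mul, Units.val_neg]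
    linear_combination -hdet
  · simp only [EuclidState.next]
    calc (σ.y / σ.x * σ.cur.2 + σ.prev.2) * σ.x + σ.cur.2 * (σ.y % σ.x)
        = σ.cur.2 * (σ.x * (σ.y / σ.x) + σ.y % σ.x) + σ.prev.2 * σ.x := by ring
      _ = N := by rw [Nat.div_add_mod, hσ.cross]
  · simp only [EuclidState.next]
    have := hσ.denom_pos
    omega

theorem Invariant.cur_le_next_cur {N M : ℕ} {σ : EuclidState} (hσ : Invariant N M σ)
    (hx : 0 < σ.x) : σ.cur.2 + σ.prev.2 ≤ σ.next.cur.2 := by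
  have ha : 1 ≤ σ.y / σ.x := (Nat.one_le_div_iff hx).2 hσ.x_lt_y.le
  simp only [EuclidState.next]
  nlinarith

theorem Invariant.le_mul_abs {N M : ℕ} {σ : EuclidState} (hσ : Invariant N M σ)
    (hq : 0 < σ.prev.2) {P Q : ℤ} (hQ : 0 < Q) (hQq : Q < σ.cur.2) :
    (N : ℤ) ≤ (σ.prev.2 + σ.cur.2) * |Q * M - P * N| := by
  obtain ⟨s, h₂, h₁, hdet⟩ := hσ.sign
  have hy : (σ.y : ℤ) ≤ |Q * M - P * N| :=
    le_abs_mul_sub_mul s (-s) (by positivity) (by positivity) h₂ h₁ (by simpa using hdet)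
      (by exact_mod_cast hq) hQ hQq
  have hcross : (σ.cur.2 * σ.y + σ.prev.2 * σ.x : ℤ) = N := by exact_mod_cast hσ.cross
  have hxy : (σ.x : ℤ) ≤ σ.y := by exact_mod_cast hσ.x_lt_y.le
  nlinarith

end EuclidState

theorem convergents_denominators {n m j a' : ℕ} {pq pq' : ℕ × ℕ} (hnm : n < m)
    (ha' : (cfQuots n m)[j + 1]? = some a') (hpq : (convergents n m)[j]? = some pq)
    (hpq' : (convergents n m)[j + 1]? = some pq') :
    0 < pq.2 ∧ pq'.2 ≤ (a' + 1) * pq.2 ∧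
      ∀ P Q : ℤ, 0 < Q → Q < pq'.2 → (n : ℤ) ≤ (pq.2 + pq'.2) * |Q * m - P * n| := by
  obtain ⟨τ, hτ, hx, hx', rfl, rfl, rfl⟩ :=
    EuclidState.exists_of_getElem?_succ (I := EuclidState.Invariant n m) (fun _ h hx => h.next hx)
      j (EuclidState.invariant_start hnm) ha' hpq hpq'
  have hq := hτ.cur_le_next_cur hx
  have hq0 := hτ.denom_pos
  refine ⟨by omega, ?_, fun P Q hQ hQq => ?_⟩
  · calc τ.next.next.cur.2 = τ.next.y / τ.next.x * τ.next.cur.2 + τ.cur.2 := rfl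
      _ ≤ _ := by nlinarith
  · exact ((hτ.next hx).next hx').le_mul_abs (show 0 < τ.next.cur.2 by omega) hQ hQq

section Binomial

open Real

theorem choose_le_two_pow_mul_exp_of_two_mul_add (k : ℕ) :
    ∀ d u : ℕ, 2 * u + d = k → (k.choose u : ℝ) ≤ 2 ^ k * exp (-((d : ℝ) ^ 2 - 1) / (4 * k)) := by
  intro d
  induction d using Nat.strong_induction_on with
  | _ d ih =>
    intro u hk
    match d, ih with
    | 0, _ | 1, _ =>
      refine (Nat.cast_le.2 (Nat.choose_le_two_pow k u)).trans ?_
      push_cast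
      exact le_mul_of_one_le_right (by positivity) (one_le_exp (by norm_num))
    | d + 2, ih =>
      have hkpos : (0 : ℝ) < k := by norm_cast; omega
      have hpascal : (k.choose (u + 1) : ℝ) * (u + 1) = k.choose u * (k - u) := by
        have := congrArg (Nat.cast : ℕ → ℝ) (Nat.choose_succ_right_eq k u)
        push_cast [Nat.cast_sub (show u ≤ k by omega)] at this
        exact this
      have hku : (k : ℝ) - u = u + d + 2 := by
        rw [← hk]; push_cast; ring
      -- the ratio `C(k,u) / C(k,u+1) = (u+1)/(u+d+2)` is at most `1 - (d+1)/k ≤ exp(-(d+1)/k)`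
      have hratio : ((u : ℝ) + 1) / (u + d + 2) ≤ exp (-(d + 1) / k) := by
        refine le_trans ?_ (add_one_le_exp _)
        rw [div_le_iff₀ (by positivity), neg_div, ← hk]
        push_cast
        field_simp
        nlinarith
      calc (k.choose u : ℝ) = k.choose (u + 1) * ((u + 1) / (u + d + 2)) := by
            rw [← hku, mul_div_assoc', hpascal, mul_div_cancel_right₀ _ (by rw [hku]; positivity)]
        _ ≤ 2 ^ k * exp (-((d : ℝ) ^ 2 - 1) / (4 * k)) * exp (-(d + 1) / k) := by
            gcongr
            exact ih d (by omega) (u + 1) (by omega)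
        _ = 2 ^ k * exp (-(((d + 2 : ℕ) : ℝ) ^ 2 - 1) / (4 * k)) := by
            rw [mul_assoc, ← exp_add]
            congr 2
            push_cast
            field_simp
            ring

theorem choose_le_two_pow_mul_exp {k h : ℕ} (hh : h ≤ k) :
    (k.choose h : ℝ) ≤ 2 ^ k * exp (-(((k : ℝ) - 2 * h) ^ 2 - 1) / (4 * k)) := by
  rcases le_total (2 * h) k with h2 | h2
  · convert choose_le_two_pow_mul_exp_of_two_mul_add k (k - 2 * h) h (by omega) using 4
    push_cast [h2]
    ring
  · rw [← Nat.choose_symm hh]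
    convert choose_le_two_pow_mul_exp_of_two_mul_add k (2 * h - k) (k - h) (by omega) using 4
    push_cast [h2, hh]
    ring

theorem choose_div_two_pow_le_exp {k h : ℕ} {T : ℝ} (hk : 1 ≤ k) (hh : h ≤ k) (hT : 18 ≤ T)
    (hsq : T * k ≤ 9 * ((k : ℝ) - 2 * h) ^ 2) : (k.choose h : ℝ) / 2 ^ k ≤ exp (-(T / 72)) := by
  have hk' : (1 : ℝ) ≤ k := by exact_mod_cast hk
  rw [div_le_iff₀' (by positivity)]
  refine (choose_le_two_pow_mul_exp hh).trans (mul_le_mul_of_nonneg_left ?_ (by positivity))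
  rw [exp_le_exp, neg_div, neg_le_neg_iff, div_le_div_iff₀ (by positivity) (by positivity)]
  nlinarith

end Binomial

section Walks

open Finset

variable {n m : ℕ}

theorem prob_mono [NeZero n] [NeZero m] {A B : (Torus n m → Bool) → Prop} (h : ∀ ω, A ω → B ω) :
    prob A ≤ prob B :=
  div_le_div_of_nonneg_right (by exact_mod_cast Set.ncard_le_ncard h) (by positivity)

theorem prob_exists_le_sum {ι : Type*} (s : Finset ι) (A : ι → (Torus n m → Bool) → Prop) :
    prob (fun ω => ∃ i ∈ s, A i ω) ≤ ∑ i ∈ s, prob (A i) := by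
  unfold prob
  rw [← Finset.sum_div]
  gcongr
  have : {ω | ∃ i ∈ s, A i ω} = ⋃ i ∈ s, {ω | A i ω} := by ext; simp
  rw [this]
  exact_mod_cast s.set_ncard_biUnion_le _

theorem prob_forall_mem_eq [NeZero n] [NeZero m] (T : Finset (Torus n m)) (v : Torus n m → Bool) :
    prob (fun ω => ∀ a ∈ T, ω a = v a) = (1 / 2) ^ #T := by
  classical
  set t : Torus n m → Finset Bool := fun a => if a ∈ T then {v a} else univ
  have hset : {ω : Torus n m → Bool | ∀ a ∈ T, ω a = v a} = ↑(Fintype.piFinset t) := by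
    ext ω
    simp only [Set.mem_ofPred_eq, mem_coe, Fintype.mem_piFinset, t]
    refine forall_congr' fun a => ?_
    split_ifs <;> simp_all
  have hterm : ∀ a, (#(t a) : ℝ) / 2 = if a ∈ T then 1 / 2 else 1 := by
    intro a
    split_ifs <;> simp_all [t]
  have hcard : Fintype.card (Torus n m) = n * m := by simp
  rw [prob, hset, Set.ncard_coe_finset, Fintype.card_piFinset, ← hcard, ← Finset.card_univ,
    ← prod_const, Nat.cast_prod, ← prod_div_distrib]
  simp_rw [hterm]
  rw [prod_ite_mem, univ_inter, prod_const]

/-- The lattice path from `z` whose `i`-th step is horizontal iff `i ∈ S`. -/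
def walk (z : Torus n m) (S : Finset ℕ) (i : ℕ) : Torus n m :=
  (z.1 + #(range i ∩ S), z.2 + #(range i \ S))

theorem walk_succ (z : Torus n m) (S : Finset ℕ) (i : ℕ) :
    walk z S (i + 1) = if i ∈ S then ((walk z S i).1 + 1, (walk z S i).2)
      else ((walk z S i).1, (walk z S i).2 + 1) := by
  have hi : i ∉ range i := by simp
  split_ifs with h
  · simp [walk, range_add_one, insert_inter_of_mem h, insert_sdiff_of_mem _ h,
      card_insert_of_notMem (fun h' => hi (mem_inter.1 h').1), add_assoc]
  · simp [walk, range_add_one, insert_inter_of_notMem h, insert_sdiff_of_notMem _ h,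
      card_insert_of_notMem (fun h' => hi (Finset.mem_sdiff.1 h').1), add_assoc]

theorem iterate_step_eq_walk (ω : Torus n m → Bool) (z : Torus n m) (S : Finset ℕ) (i : ℕ)
    (hS : ∀ t < i, (t ∈ S ↔ ω ((step ω)^[t] z) = true)) : (step ω)^[i] z = walk z S i := by
  induction i with
  | zero => simp [walk]
  | succ i ih =>
    have hi := ih fun t ht => hS t (by omega)
    have hSi := hS i (by omega)
    rw [hi] at hSi
    rw [Function.iterate_succ_apply', hi, walk_succ, step]
    by_cases hω : ω ((step ω)^[i] z) = true <;> simp_all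

def FollowsWalk (z : Torus n m) (S : Finset ℕ) (k : ℕ) (ω : Torus n m → Bool) : Prop :=
  Set.InjOn (walk z S) (range k) ∧ ∀ i ∈ range k, ω (walk z S i) = decide (i ∈ S)

theorem prob_followsWalk_le [NeZero n] [NeZero m] (z : Torus n m) (S : Finset ℕ) (k : ℕ) :
    prob (FollowsWalk z S k) ≤ (1 / 2) ^ k := by
  classical
  by_cases hinj : Set.InjOn (walk z S) (range k)
  · set T := (range k).image (walk z S)
    have hmem : ∀ i ∈ range k, walk z S i ∈ (range k ∩ S).image (walk z S) ↔ i ∈ S := by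
      intro i hi
      rw [← mem_coe, coe_image, hinj.mem_image_iff (by simp) (mem_coe.2 hi), mem_coe, mem_inter]
      exact and_iff_right hi
    refine le_of_eq ?_
    calc prob (FollowsWalk z S k)
        = prob (fun ω => ∀ a ∈ T, ω a = decide (a ∈ (range k ∩ S).image (walk z S))) := by
          refine congrArg prob (funext fun ω => propext ?_)
          simp only [FollowsWalk, T, forall_mem_image, and_iff_right hinj]
          exact forall₂_congr fun i hi => by simp only [hmem i hi]
      _ = (1 / 2) ^ k := by rw [prob_forall_mem_eq, card_image_of_injOn hinj, card_range]
  · have : {ω | FollowsWalk z S k ω} = ∅ := Set.eq_empty_of_forall_notMem fun ω h => hinj h.1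
    rw [prob, this, Set.ncard_empty, Nat.cast_zero, zero_div]
    positivity

theorem dvd_of_walk_eq_self {z : Torus n m} {S : Finset ℕ} {k : ℕ} (hS : S ⊆ range k)
    (h : walk z S k = z) : n ∣ #S ∧ m ∣ k - #S := by
  rw [walk, inter_eq_right.2 hS, card_sdiff_of_subset hS, card_range, Prod.ext_iff] at h
  exact ⟨(ZMod.natCast_eq_zero_iff _ _).1 (add_eq_left.1 h.1),
    (ZMod.natCast_eq_zero_iff _ _).1 (add_eq_left.1 h.2)⟩

theorem ncard_orbit_eq_minimalPeriod {α : Type*} {f : α → α} {x : α} (hx : x ∈ periodicPts f) :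
    {w | ∃ i, f^[i] x = w}.ncard = minimalPeriod f x := by
  have horbit : {w | ∃ i, f^[i] x = w} = (f^[·] x) '' Set.Iio (minimalPeriod f x) := by
    ext w
    constructor
    · rintro ⟨i, rfl⟩
      exact ⟨i % minimalPeriod f x, Nat.mod_lt _ (minimalPeriod_pos_of_mem_periodicPts hx),
        iterate_mod_minimalPeriod_eq⟩
    · rintro ⟨i, -, rfl⟩
      exact ⟨i, rfl⟩
  rw [horbit, iterate_injOn_Iio_minimalPeriod.ncard_image, ← coe_range, Set.ncard_coe_finset,
    card_range]

theorem exists_followsWalk_of_mem_cycles {ω : Torus n m → Bool} {Cy : Set (Torus n m)}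
    (hCy : Cy ∈ cycles ω) : ∃ z, ∃ S ⊆ range Cy.ncard, 1 ≤ Cy.ncard ∧ n ∣ #S ∧
      m ∣ Cy.ncard - #S ∧ FollowsWalk z S Cy.ncard ω := by
  obtain ⟨z, hz, rfl⟩ := hCy
  rw [ncard_orbit_eq_minimalPeriod hz]
  set k := minimalPeriod (step ω) z
  set S := (range k).filter (fun t => ω ((step ω)^[t] z) = true)
  have hwalk : ∀ i ≤ k, (step ω)^[i] z = walk z S i := fun i hi =>
    iterate_step_eq_walk ω z S i fun t ht => by simp [S]; omega
  have hclosed : walk z S k = z := by rw [← hwalk k le_rfl, iterate_minimalPeriod]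
  obtain ⟨hn, hm⟩ := dvd_of_walk_eq_self (filter_subset _ _) hclosed
  refine ⟨z, S, filter_subset _ _, minimalPeriod_pos_of_mem_periodicPts hz, hn, hm,
    fun i hi j hj hij => ?_, fun i hi => ?_⟩
  · rw [mem_coe, mem_range] at hi hj
    rw [← hwalk i hi.le, ← hwalk j hj.le] at hij
    exact iterate_injOn_Iio_minimalPeriod hi hj hij
  · rw [mem_range] at hi
    rw [← hwalk i hi.le]
    cases h : ω ((step ω)^[i] z) <;> simp [S, h, hi]

theorem prob_exists_cycle_ncard_le [NeZero n] [NeZero m] (L : ℕ) {B : ℝ} (hB0 : 0 ≤ B)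
    (hB : ∀ k h, 1 ≤ k → k ≤ L → h ≤ k → n ∣ h → m ∣ k - h → (k.choose h : ℝ) / 2 ^ k ≤ B) :
    prob (n := n) (m := m) (fun ω => ∃ Cy ∈ cycles ω, Cy.ncard ≤ L) ≤
      L * (n * m) * (L + 1) * B := by
  set H : ℕ → Finset ℕ := fun k => (range (k + 1)).filter fun h => n ∣ h ∧ m ∣ k - h
  have hcover : ∀ ω : Torus n m → Bool, (∃ Cy ∈ cycles ω, Cy.ncard ≤ L) →
      ∃ k ∈ Icc 1 L, ∃ z ∈ (univ : Finset _), ∃ h ∈ H k, ∃ S ∈ powersetCard h (range k),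
        FollowsWalk z S k ω := by
    rintro ω ⟨Cy, hCy, hL⟩
    obtain ⟨z, S, hS, hk, hn, hm, hω⟩ := exists_followsWalk_of_mem_cycles hCy
    have hSk : #S < Cy.ncard + 1 := by simpa using Nat.lt_succ_of_le (card_le_card hS)
    exact ⟨_, mem_Icc.2 ⟨hk, hL⟩, z, mem_univ _, #S, mem_filter.2 ⟨mem_range.2 hSk, hn, hm⟩,
      S, mem_powersetCard.2 ⟨hS, rfl⟩, hω⟩
  calc prob (n := n) (m := m) (fun ω => ∃ Cy ∈ cycles ω, Cy.ncard ≤ L)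
      ≤ ∑ k ∈ Icc 1 L, ∑ z : Torus n m, ∑ h ∈ H k, ∑ S ∈ powersetCard h (range k),
          prob (FollowsWalk z S k) := by
        refine (prob_mono hcover).trans ((prob_exists_le_sum _ _).trans (sum_le_sum fun k _ => ?_))
        refine (prob_exists_le_sum _ _).trans (sum_le_sum fun z _ => ?_)
        exact (prob_exists_le_sum _ _).trans (sum_le_sum fun h _ => prob_exists_le_sum _ _)
    _ ≤ ∑ k ∈ Icc 1 L, ∑ z : Torus n m, ∑ h ∈ H k, B := by
        gcongr with k hk z _ h hh
        rw [mem_Icc] at hk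
        rw [mem_filter, mem_range] at hh
        refine (sum_le_sum fun S _ => prob_followsWalk_le z S k).trans (le_of_eq_of_le ?_
          (hB k h hk.1 hk.2 (by omega) hh.2.1 hh.2.2))
        rw [sum_const, card_powersetCard, card_range, nsmul_eq_mul, one_div_pow, mul_one_div]
    _ ≤ ∑ k ∈ Icc 1 L, ∑ z : Torus n m, ((L : ℝ) + 1) * B := by
        gcongr with k hk
        rw [sum_const, nsmul_eq_mul]
        gcongr
        exact_mod_cast (card_filter_le _ _).trans (by simpa using (mem_Icc.1 hk).2)
    _ = L * (n * m) * (L + 1) * B := by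
        simp only [sum_const, card_univ, Fintype.card_prod, ZMod.card, Nat.card_Icc, nsmul_eq_mul]
        push_cast
        ring

end Walks

section Estimates

open Real

theorem le_mul_abs_sub_two_mul {n m q q' k h : ℕ}
    (happrox : ∀ P Q : ℤ, 0 < Q → Q < q' → (n : ℤ) ≤ (q + q') * |Q * m - P * n|) (hq : 0 < q)
    (hk : 1 ≤ k) (hkq' : k < q' * m) (hhk : h ≤ k) (hnh : n ∣ h) (hmh : m ∣ k - h) :
    (n : ℤ) ≤ (q + q') * |(k : ℤ) - 2 * h| := by
  obtain ⟨p, rfl⟩ := hnh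
  obtain ⟨Q, hQ⟩ := hmh
  have hkpQ : k = n * p + m * Q := by omega
  rcases Nat.eq_zero_or_pos Q with rfl | hQ0
  · have hp : 1 ≤ p := Nat.pos_of_ne_zero (by rintro rfl; simp at hkpQ; omega)
    rw [hkpQ]
    push_cast
    rw [show (n * p + m * 0 : ℤ) - 2 * (n * p) = -(n * p) by ring, abs_neg,
      abs_of_nonneg (by positivity)]
    have : (1 : ℤ) ≤ q := by exact_mod_cast hq
    nlinarith
  · have hQq' : Q < q' := by
      by_contra! hle
      have := Nat.mul_le_mul_left m hle
      nlinarith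
    convert happrox p Q (by exact_mod_cast hQ0) (by exact_mod_cast hQq') using 3
    rw [hkpQ]
    push_cast
    ring

theorem add_le_three_mul_rpow {x ε q q' a' : ℝ} (hx : 1 ≤ x) (hε : 0 ≤ ε) (hq0 : 0 ≤ q)
    (hq : q ≤ x ^ (1 / 3 - ε / 2)) (ha' : a' ≤ x ^ (ε / 4)) (hq' : q' ≤ (a' + 1) * q) :
    q + q' ≤ 3 * x ^ (1 / 3 - ε / 4) := by
  have hV : 1 ≤ x ^ (ε / 4) := one_le_rpow hx (by positivity)
  have hid : x ^ (ε / 4) * x ^ (1 / 3 - ε / 2) = x ^ (1 / 3 - ε / 4) := by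
    rw [← rpow_add (by positivity)]
    ring_nf
  calc q + q' ≤ (x ^ (ε / 4) + 2) * q := by nlinarith
    _ ≤ (x ^ (ε / 4) + 2) * x ^ (1 / 3 - ε / 2) := by gcongr
    _ ≤ 3 * x ^ (1 / 3 - ε / 4) := by
      rw [← hid]
      nlinarith [rpow_nonneg (by positivity : 0 ≤ x) (1 / 3 - ε / 2)]

theorem mul_le_nine_mul_sq {x ε d k s : ℝ} (hx : 0 < x) (hs : x ≤ d * |s|)
    (hd : d ≤ 3 * x ^ (1 / 3 - ε / 4)) (hkx : k ≤ x ^ (4 / 3 - ε)) :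
    x ^ (3 * ε / 2) * k ≤ 9 * s ^ 2 := by
  set Y := x ^ (1 / 3 - ε / 4)
  have hY : 0 < Y := rpow_pos_of_pos hx _
  have hid : Y ^ 2 * (x ^ (3 * ε / 2) * x ^ (4 / 3 - ε)) = x ^ 2 := by
    rw [sq, ← rpow_add hx, ← rpow_add hx, ← rpow_add hx,
      show 1 / 3 - ε / 4 + (1 / 3 - ε / 4) + (3 * ε / 2 + (4 / 3 - ε)) = ((2 : ℕ) : ℝ) by
        push_cast; ring, rpow_natCast]
  have hsq : x ^ 2 ≤ 9 * Y ^ 2 * s ^ 2 := by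
    calc x ^ 2 ≤ (d * |s|) ^ 2 := by gcongr
      _ ≤ (3 * Y * |s|) ^ 2 :=
        pow_le_pow_left₀ (hx.le.trans hs) (mul_le_mul_of_nonneg_right hd (abs_nonneg s)) 2
      _ = 9 * Y ^ 2 * s ^ 2 := by rw [mul_pow, mul_pow, sq_abs]; ring
  have hT : 0 ≤ x ^ (3 * ε / 2) := by positivity
  have : Y ^ 2 * (x ^ (3 * ε / 2) * k) ≤ Y ^ 2 * (9 * s ^ 2) := by
    calc Y ^ 2 * (x ^ (3 * ε / 2) * k) ≤ Y ^ 2 * (x ^ (3 * ε / 2) * x ^ (4 / 3 - ε)) := by gcongr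
      _ ≤ Y ^ 2 * (9 * s ^ 2) := by nlinarith
  exact le_of_mul_le_mul_left this (by positivity)

theorem eventually_mul_pow_mul_exp_le {K ε : ℝ} (hK : 0 < K) (hε : 0 < ε) :
    ∀ᶠ x : ℝ in atTop, K * x ^ 6 * exp (-(x ^ (3 * ε / 2) / 72)) ≤ exp (-x ^ (ε / 2)) := by
  set c := 12 / ε + 1
  have hpoly : ∀ᶠ y : ℝ in atTop, log K + c * y ≤ y ^ 3 / 72 := by
    filter_upwards [eventually_ge_atTop (72 * (|log K| + c) + 1)] with y hy
    have hc : 0 ≤ c := by positivity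
    have hy1 : 1 ≤ y := by linarith [abs_nonneg (log K)]
    have hsq : 72 * (|log K| + c) ≤ y ^ 2 := by nlinarith
    have hlin : log K + c * y ≤ (|log K| + c) * y := by
      nlinarith [le_abs_self (log K), mul_le_mul_of_nonneg_left hy1 (abs_nonneg (log K))]
    nlinarith
  filter_upwards [(tendsto_rpow_atTop (half_pos hε)).eventually hpoly, eventually_gt_atTop 0]
    with x hx hx0
  have hcube : x ^ (3 * ε / 2) = (x ^ (ε / 2)) ^ 3 := by
    rw [← rpow_natCast, ← rpow_mul hx0.le]
    ring_nf
  have hlog : log x ≤ x ^ (ε / 2) / (ε / 2) := log_le_rpow_div hx0.le (half_pos hε)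
  rw [← exp_log (by positivity : 0 < K * x ^ 6), ← exp_add, exp_le_exp, log_mul hK.ne'
    (by positivity), log_pow, hcube]
  have : 6 * log x ≤ 12 / ε * x ^ (ε / 2) := by
    rw [div_div_eq_mul_div] at hlog
    calc 6 * log x ≤ 6 * (x ^ (ε / 2) * 2 / ε) := by gcongr
      _ = 12 / ε * x ^ (ε / 2) := by ring
  push_cast
  linarith

theorem choose_div_two_pow_le_of_convergents {n m q q' a' k h : ℕ} {ε : ℝ} (hε : 0 < ε)
    (hn : 1 ≤ n) (hnm : n < m) (hq0 : 0 < q) (hq : (q : ℝ) ≤ n ^ (1 / 3 - ε / 2))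
    (hq' : (n : ℝ) ^ (1 / 3 - ε / 2) < q') (ha' : (a' : ℝ) ≤ n ^ (ε / 4))
    (hq'le : q' ≤ (a' + 1) * q)
    (happrox : ∀ P Q : ℤ, 0 < Q → Q < q' → (n : ℤ) ≤ (q + q') * |Q * m - P * n|)
    (hT : 18 ≤ (n : ℝ) ^ (3 * ε / 2)) (hk : 1 ≤ k) (hkn : (k : ℝ) ≤ n ^ (4 / 3 - ε)) (hhk : h ≤ k)
    (hnh : n ∣ h) (hmh : m ∣ k - h) :
    (k.choose h : ℝ) / 2 ^ k ≤ exp (-((n : ℝ) ^ (3 * ε / 2) / 72)) := by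
  have hx : (1 : ℝ) ≤ n := by exact_mod_cast hn
  have hkq' : k < q' * m := by
    have hm : (n : ℝ) < m := by exact_mod_cast hnm
    have : (k : ℝ) < q' * m :=
      calc (k : ℝ) ≤ n ^ (4 / 3 - ε) := hkn
        _ ≤ n ^ (1 / 3 - ε / 2) * n := by
          rw [← rpow_add_one (by positivity)]
          exact rpow_le_rpow_of_exponent_le hx (by linarith)
        _ < q' * m := by gcongr
    exact_mod_cast this
  have hsep : (n : ℝ) ≤ (q + q') * |(k : ℝ) - 2 * h| := by
    exact_mod_cast le_mul_abs_sub_two_mul happrox hq0 hk hkq' hhk hnh hmh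
  exact choose_div_two_pow_le_exp hk hhk hT (mul_le_nine_mul_sq (by positivity) hsep
    (add_le_three_mul_rpow hx hε.le (by positivity) hq ha' (by exact_mod_cast hq'le)) hkn)

end Estimates

/-- In the irrational regime, if `q_j ≤ n^{1/3-ε/2} < q_{j+1}`, `a_j < n^{ε/2}` and
`a_{j+1} ≤ n^{ε/4}`, the probability of a cycle of length at most `n^{4/3-ε}` is at
most `exp(-c n^{ε/2})`. -/
theorem irrational_regime_no_short_cycles (C : ℝ) (hC : 1 < C) (ε : ℝ) (hε : 0 < ε) :
    ∃ c > 0, ∃ n₀ : ℕ, ∀ n : ℕ, n₀ ≤ n → ∀ m : ℕ, n < m → (m : ℝ) < C * n →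
      ∀ j : ℕ, ∀ a a' : ℕ, ∀ pq pq' : ℕ × ℕ,
        (cfQuots n m)[j]? = some a →
        (cfQuots n m)[j + 1]? = some a' →
        (convergents n m)[j]? = some pq →
        (convergents n m)[j + 1]? = some pq' →
        (pq.2 : ℝ) ≤ (n : ℝ) ^ ((1 : ℝ) / 3 - ε / 2) →
        (n : ℝ) ^ ((1 : ℝ) / 3 - ε / 2) < (pq'.2 : ℝ) →
        (a : ℝ) < (n : ℝ) ^ (ε / 2) →
        (a' : ℝ) ≤ (n : ℝ) ^ (ε / 4) →
        prob (n := n) (m := m)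
            (fun ω => ∃ Cy ∈ cycles ω, (Cy.ncard : ℝ) ≤ (n : ℝ) ^ ((4 : ℝ) / 3 - ε)) ≤
          Real.exp (-c * (n : ℝ) ^ (ε / 2)) := by
  obtain ⟨n₀, hn₀⟩ := eventually_atTop.1 <| tendsto_natCast_atTop_atTop.eventually <|
    (eventually_ge_atTop 1).and <|
      ((tendsto_rpow_atTop (by positivity : 0 < 3 * ε / 2)).eventually_ge_atTop 18).and
        (eventually_mul_pow_mul_exp_le (by positivity : 0 < 2 * C) hε)
  refine ⟨1, one_pos, n₀, fun n hn m hnm hmC j a a' pq pq' _ ha' hpq hpq' hq hq' _ ha'le => ?_⟩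
  obtain ⟨hn1, hT, hdecay⟩ := hn₀ n hn
  have hn1' : 1 ≤ n := by exact_mod_cast hn1
  have : NeZero n := ⟨by omega⟩
  have : NeZero m := ⟨by omega⟩
  obtain ⟨hq0, hq'le, happrox⟩ := convergents_denominators hnm ha' hpq hpq'
  set L := ⌊(n : ℝ) ^ ((4 : ℝ) / 3 - ε)⌋₊
  have hLn : (L : ℝ) ≤ (n : ℝ) ^ ((4 : ℝ) / 3 - ε) := Nat.floor_le (by positivity)
  have hL : (L : ℝ) ≤ n ^ 2 := hLn.trans <| by
    rw [← Real.rpow_natCast]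
    exact Real.rpow_le_rpow_of_exponent_le hn1 (by push_cast; linarith)
  calc prob (fun ω => ∃ Cy ∈ cycles ω, (Cy.ncard : ℝ) ≤ (n : ℝ) ^ ((4 : ℝ) / 3 - ε))
      ≤ prob (n := n) (m := m) (fun ω => ∃ Cy ∈ cycles ω, Cy.ncard ≤ L) :=
        prob_mono fun ω ⟨Cy, hCy, hle⟩ => ⟨Cy, hCy, Nat.le_floor hle⟩
    _ ≤ L * (n * m) * (L + 1) * Real.exp (-((n : ℝ) ^ (3 * ε / 2) / 72)) :=
        prob_exists_cycle_ncard_le L (Real.exp_pos _).le fun k h hk hkL hhk hnh hmh =>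
          choose_div_two_pow_le_of_convergents hε hn1' hnm hq0 hq hq' ha'le hq'le happrox hT hk
            ((Nat.cast_le.2 hkL).trans hLn) hhk hnh hmh
    _ ≤ n ^ 2 * (n * (C * n)) * (2 * n ^ 2) * Real.exp (-((n : ℝ) ^ (3 * ε / 2) / 72)) := by
        gcongr
        nlinarith
    _ ≤ Real.exp (-1 * (n : ℝ) ^ (ε / 2)) := by
        rw [neg_one_mul]
        convert hdecay using 1
        ring
end
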